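/- arXiv:1412.2253 — 2 statements merged into one kernel-verified Lean document; each statement's English description precedes it below -/
import Mathlib

section
/- Let A be a nontrivial pseudo BL-algebra satisfying the identities (x→y)⁻ = (x⇝y)⁻ and (x→y)·(x⇝y) = (x⇝y)·(x→y) for all x, y ∈ A. Then every maximal filter of A is normal if, and only if, A satisfies ((x₁·⋯·xₙ)⁻)² ≤ (x_{π(1)}²·⋯·x_{π(n)}²)⁻ for all n ≥ 1, all elements x₁, …, xₙ and all permutations π of {1, …, n}. -/
/-- A pseudo BL-algebra: a bounded lattice `(A; ∨, ∧, 0, 1)` together with a monoid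
structure `(A; ·, 1)` and two residua `→` (`himp`) and `⇝` (`rimp`) satisfying the
residuation, divisibility and prelinearity conditions. -/
class PseudoBL (A : Type*) extends Lattice A, Monoid A, Zero A where
  himp : A → A → A
  rimp : A → A → A
  zero_le : ∀ x : A, (0 : A) ≤ x
  le_one : ∀ x : A, x ≤ 1
  mul_le_iff_himp : ∀ x y z : A, x * y ≤ z ↔ x ≤ himp y z
  mul_le_iff_rimp : ∀ x y z : A, x * y ≤ z ↔ y ≤ rimp x z
  himp_mul_inf : ∀ x y : A, himp x y * x = x ⊓ y
  mul_rimp_inf : ∀ x y : A, y * rimp y x = x ⊓ y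
  prelin_himp : ∀ x y : A, himp x y ⊔ himp y x = 1
  prelin_rimp : ∀ x y : A, rimp x y ⊔ rimp y x = 1

namespace PseudoBL

variable {A : Type*} [PseudoBL A]

/-- The left negation `x⁻ := x → 0`. -/
def lneg (x : A) : A := himp x 0

/-- A filter: a nonempty subset closed under `·` and upward closed. -/
def IsFilter (F : Set A) : Prop :=
  F.Nonempty ∧ (∀ x ∈ F, ∀ y ∈ F, x * y ∈ F) ∧ ∀ x ∈ F, ∀ y : A, x ≤ y → y ∈ F

/-- A maximal filter: a proper filter not properly contained in any proper filter. -/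
def IsMaximalFilter (F : Set A) : Prop :=
  IsFilter F ∧ F ≠ Set.univ ∧
    ∀ G : Set A, IsFilter G → G ≠ Set.univ → F ⊆ G → F = G

/-- A normal filter: `x→y ∈ F` iff `x⇝y ∈ F`. -/
def IsNormalFilter (F : Set A) : Prop :=
  ∀ x y : A, himp x y ∈ F ↔ rimp x y ∈ F

end PseudoBL

open PseudoBL

/-!
The hypothesis `(x→y)⁻ = (x⇝y)⁻` makes the left negation of a product blind to the order of
its factors: `(vu)⁻ = (uv)⁻`. Consequently the negation of `x_{π(1)}²⋯x_{π(n)}²` equals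
`(P²)⁻` for `P = x₁⋯xₙ`, and `(P⁻)² ≤ P⁻ ≤ (P²)⁻`, so the inequality holds outright.
On the other side, if `M` is maximal and `z ∉ M`, then `(e ⊓ z)ⁿ ≤ 0` for some `e ∈ M`, and
reordering the factors of `(e z)ⁿ` gives `eⁿ ≤ (zⁿ)⁻`, so `(zⁿ)⁻ ∈ M`. Since
`((x→y)ⁿ)⁻ = ((x⇝y)ⁿ)⁻`, the elements `x→y` and `x⇝y` can only lie in `M` together:
every maximal filter is normal. Both sides of the equivalence are therefore true.
-/

namespace PseudoBL

variable {A : Type*} [PseudoBL A]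

theorem le_himp_iff {x y z : A} : x ≤ himp y z ↔ x * y ≤ z :=
  (mul_le_iff_himp x y z).symm

theorem le_rimp_iff {x y z : A} : y ≤ rimp x z ↔ x * y ≤ z :=
  (mul_le_iff_rimp x y z).symm

instance : MulLeftMono A :=
  ⟨fun _ _ _ h => (mul_le_iff_rimp _ _ _).2 (h.trans (le_rimp_iff.2 le_rfl))⟩

instance : MulRightMono A :=
  ⟨fun _ _ _ h => (mul_le_iff_himp _ _ _).2 (h.trans (le_himp_iff.2 le_rfl))⟩

theorem mul_le_left (x y : A) : x * y ≤ x :=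
  mul_le_of_le_one_right' (PseudoBL.le_one y)

theorem mul_le_right (x y : A) : x * y ≤ y :=
  mul_le_of_le_one_left' (PseudoBL.le_one x)

theorem mul_le_inf (x y : A) : x * y ≤ x ⊓ y :=
  le_inf (mul_le_left x y) (mul_le_right x y)

theorem le_lneg_iff {x y : A} : x ≤ lneg y ↔ x * y ≤ 0 :=
  le_himp_iff

theorem lneg_eq_one_iff {x : A} : lneg x = 1 ↔ x ≤ 0 := by
  rw [← one_mul x, ← le_lneg_iff, one_mul]
  exact ⟨fun h => h.ge, fun h => le_antisymm (PseudoBL.le_one _) h⟩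

theorem lneg_mul_self (x : A) : lneg x * x = 0 :=
  le_antisymm (le_lneg_iff.1 le_rfl) (PseudoBL.zero_le _)

theorem lneg_antitone : Antitone (lneg : A → A) := fun _ _ h =>
  le_lneg_iff.2 ((mul_le_mul_right h _).trans (lneg_mul_self _).le)

theorem lneg_mul (x y : A) : lneg (x * y) = himp x (lneg y) := by
  refine le_antisymm ?_ ?_
  · rw [le_himp_iff, le_lneg_iff, mul_assoc]
    exact (lneg_mul_self _).le
  · rw [le_lneg_iff, ← mul_assoc]
    calc himp x (lneg y) * x * y ≤ lneg y * y :=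
          mul_le_mul_left (by rw [himp_mul_inf]; exact inf_le_right) y
      _ = 0 := lneg_mul_self y

/-- Apply the hypothesis to `u` and `vu`: `vu = u ⊓ vu` is both `(u → vu)·u` and `u·(u ⇝ vu)`,
and `v ≤ u → vu`. -/
theorem lneg_mul_comm (hneg : ∀ x y : A, lneg (himp x y) = lneg (rimp x y)) (u v : A) :
    lneg (u * v) = lneg (v * u) := by
  suffices key : ∀ u v : A, lneg (v * u) ≤ lneg (u * v) from le_antisymm (key v u) (key u v)
  intro u v
  have hvu : u ⊓ v * u = v * u := inf_eq_right.2 (mul_le_right v u)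
  calc lneg (v * u) = lneg (himp u (v * u) * u) := by rw [himp_mul_inf, hvu]
    _ = lneg (u * rimp u (v * u)) := by rw [himp_mul_inf, mul_rimp_inf, inf_comm]
    _ = lneg (u * himp u (v * u)) := by rw [lneg_mul, lneg_mul, hneg]
    _ ≤ lneg (u * v) := lneg_antitone (mul_le_mul_right (le_himp_iff.2 le_rfl) u)

section OrderInvariant

variable (hlneg : ∀ u v : A, lneg (u * v) = lneg (v * u))
include hlneg

theorem lneg_mul_swap (x y : A) : lneg (x * y) = himp y (lneg x) := by
  rw [hlneg, lneg_mul]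

theorem lneg_prod_perm {l₁ l₂ : List A} (h : l₁.Perm l₂) : lneg l₁.prod = lneg l₂.prod := by
  induction h with
  | nil => rfl
  | cons x _ ih => rw [List.prod_cons, List.prod_cons, lneg_mul, lneg_mul, ih]
  | swap x y l =>
    simp only [List.prod_cons]
    rw [hlneg, mul_assoc, lneg_mul, hlneg, ← lneg_mul]
  | trans _ _ ih₁ ih₂ => exact ih₁.trans ih₂

theorem lneg_prod_map_sq (l : List A) : lneg (l.map (· ^ 2)).prod = lneg (l.prod ^ 2) := by
  induction l with
  | nil => simp
  | cons a l ih =>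
    have hswap : [a, a, l.prod, l.prod].Perm [a, l.prod, a, l.prod] :=
      .cons a (.swap l.prod a [l.prod])
    calc lneg ((a :: l).map (· ^ 2)).prod = lneg (a * (a * (l.map (· ^ 2)).prod)) := by
          rw [List.map_cons, List.prod_cons, sq, mul_assoc]
      _ = lneg (a * (a * (l.prod * l.prod))) := by
          rw [lneg_mul, lneg_mul, ih, sq, ← lneg_mul, ← lneg_mul]
      _ = lneg [a, a, l.prod, l.prod].prod := by simp only [List.prod_cons, List.prod_nil, mul_one]
      _ = lneg [a, l.prod, a, l.prod].prod := lneg_prod_perm hlneg hswap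
      _ = lneg ((a :: l).prod ^ 2) := by
          simp only [List.prod_cons, List.prod_nil, mul_one, sq, mul_assoc]

theorem lneg_prod_sq_le_lneg_prod_perm_sq {n : ℕ} (x : Fin n → A) (π : Equiv.Perm (Fin n)) :
    lneg (List.ofFn x).prod ^ 2 ≤ lneg (List.ofFn fun i => x (π i) ^ 2).prod := by
  have hperm : (List.ofFn fun i => x (π i) ^ 2).Perm ((List.ofFn x).map (· ^ 2)) := by
    rw [List.map_ofFn]
    exact Equiv.Perm.ofFn_comp_perm π ((· ^ 2) ∘ x)
  rw [lneg_prod_perm hlneg hperm, lneg_prod_map_sq hlneg, sq, sq]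
  exact (mul_le_left _ _).trans (lneg_antitone (mul_le_left _ _))

theorem lneg_mul_pow (u v : A) (n : ℕ) : lneg ((u * v) ^ n) = lneg (u ^ n * v ^ n) := by
  induction n with
  | zero => simp
  | succ n ih =>
    calc lneg ((u * v) ^ (n + 1)) = himp u (lneg ((u * v) ^ n * v)) := by
          rw [pow_succ', mul_assoc, lneg_mul, hlneg v]
      _ = himp u (lneg (u ^ n * v ^ n * v)) := by
          rw [lneg_mul_swap hlneg, ih, ← lneg_mul_swap hlneg]
      _ = lneg (u ^ (n + 1) * v ^ (n + 1)) := by rw [← lneg_mul, pow_succ', pow_succ, mul_assoc,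
          mul_assoc]

theorem lneg_pow_congr {u v : A} (h : lneg u = lneg v) (n : ℕ) :
    lneg (u ^ n) = lneg (v ^ n) := by
  induction n with
  | zero => rw [pow_zero, pow_zero]
  | succ n ih =>
    rw [pow_succ, lneg_mul_swap hlneg, ih, ← lneg_mul_swap hlneg, lneg_mul, h, ← lneg_mul,
      ← pow_succ]

end OrderInvariant

namespace IsFilter

variable {F : Set A}

theorem mul_mem (hF : IsFilter F) {x y : A} (hx : x ∈ F) (hy : y ∈ F) : x * y ∈ F :=
  hF.2.1 x hx y hy

theorem mem_of_le (hF : IsFilter F) {x y : A} (hx : x ∈ F) (hxy : x ≤ y) : y ∈ F :=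
  hF.2.2 x hx y hxy

theorem one_mem (hF : IsFilter F) : (1 : A) ∈ F :=
  hF.1.elim fun _ hx => hF.mem_of_le hx (PseudoBL.le_one _)

theorem inf_mem (hF : IsFilter F) {x y : A} (hx : x ∈ F) (hy : y ∈ F) : x ⊓ y ∈ F :=
  hF.mem_of_le (hF.mul_mem hx hy) (mul_le_inf x y)

theorem pow_mem (hF : IsFilter F) {x : A} (hx : x ∈ F) (n : ℕ) : x ^ n ∈ F := by
  induction n with
  | zero => exact pow_zero x ▸ hF.one_mem
  | succ n ih => exact pow_succ x n ▸ hF.mul_mem ih hx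

theorem zero_notMem (hF : IsFilter F) (hne : F ≠ Set.univ) : (0 : A) ∉ F := fun h0 =>
  hne (Set.eq_univ_of_forall fun x => hF.mem_of_le h0 (PseudoBL.zero_le x))

end IsFilter

namespace IsMaximalFilter

variable {M : Set A}

/-- The filter generated by `M ∪ {z}` is `{y | ∃ e ∈ M, ∃ n, (e ⊓ z)ⁿ ≤ y}`; by maximality it
contains `0`. -/
theorem exists_inf_pow_le_zero (hM : IsMaximalFilter M) {z : A} (hz : z ∉ M) :
    ∃ e ∈ M, ∃ n : ℕ, (e ⊓ z) ^ n ≤ 0 := by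
  obtain ⟨hF, hne, hmax⟩ := hM
  set G : Set A := {y | ∃ e ∈ M, ∃ n : ℕ, (e ⊓ z) ^ n ≤ y}
  have hG : IsFilter G := by
    refine ⟨⟨1, 1, hF.one_mem, 0, (pow_zero _).le⟩, ?_, ?_⟩
    · rintro a ⟨e, he, m, ha⟩ b ⟨e', he', n, hb⟩
      refine ⟨e ⊓ e', hF.inf_mem he he', m + n, ?_⟩
      rw [pow_add]
      refine mul_le_mul' ((pow_le_pow_left' ?_ m).trans ha) ((pow_le_pow_left' ?_ n).trans hb)
      · exact inf_le_inf_right z inf_le_left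
      · exact inf_le_inf_right z inf_le_right
    · rintro a ⟨e, he, n, ha⟩ b hab
      exact ⟨e, he, n, ha.trans hab⟩
  have hzG : z ∈ G := ⟨1, hF.one_mem, 1, by rw [pow_one]; exact inf_le_right⟩
  have hMG : M ⊆ G := fun e he => ⟨e, he, 1, by rw [pow_one]; exact inf_le_left⟩
  by_contra! h
  have hGne : G ≠ Set.univ := fun hG_univ =>
    let ⟨e, he, n, h0⟩ := (hG_univ ▸ Set.mem_univ (0 : A) : (0 : A) ∈ G)
    h e he n h0
  exact hz (hmax G hG hGne hMG ▸ hzG)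

theorem exists_lneg_pow_mem (hlneg : ∀ u v : A, lneg (u * v) = lneg (v * u))
    (hM : IsMaximalFilter M) {z : A} (hz : z ∉ M) : ∃ n : ℕ, lneg (z ^ n) ∈ M := by
  obtain ⟨e, he, n, hn⟩ := hM.exists_inf_pow_le_zero hz
  have hez : (e * z) ^ n ≤ 0 := (pow_le_pow_left' (mul_le_inf e z) n).trans hn
  rw [← lneg_eq_one_iff, lneg_mul_pow hlneg, lneg_eq_one_iff, ← le_lneg_iff] at hez
  exact ⟨n, hM.1.mem_of_le (hM.1.pow_mem he n) hez⟩

theorem mem_of_lneg_pow_eq (hlneg : ∀ u v : A, lneg (u * v) = lneg (v * u))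
    (hM : IsMaximalFilter M) {u v : A} (hu : u ∈ M) (huv : ∀ n : ℕ, lneg (u ^ n) = lneg (v ^ n)) :
    v ∈ M := by
  by_contra hv
  obtain ⟨n, hn⟩ := hM.exists_lneg_pow_mem hlneg hv
  rw [← huv] at hn
  exact hM.1.zero_notMem hM.2.1 (lneg_mul_self (u ^ n) ▸ hM.1.mul_mem hn (hM.1.pow_mem hu n))

theorem isNormalFilter (hneg : ∀ x y : A, lneg (himp x y) = lneg (rimp x y))
    (hM : IsMaximalFilter M) : IsNormalFilter M := by
  have hlneg := lneg_mul_comm hneg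
  intro x y
  exact ⟨fun h => hM.mem_of_lneg_pow_eq hlneg h (lneg_pow_congr hlneg (hneg x y)),
    fun h => hM.mem_of_lneg_pow_eq hlneg h (lneg_pow_congr hlneg (hneg x y).symm)⟩

end IsMaximalFilter

end PseudoBL

theorem stmt_9_general {A : Type*} [PseudoBL A]
    (hneg : ∀ x y : A, lneg (PseudoBL.himp x y) = lneg (PseudoBL.rimp x y)) :
    (∀ F : Set A, IsMaximalFilter F → IsNormalFilter F) ↔
      (∀ (n : ℕ), 1 ≤ n → ∀ (x : Fin n → A) (π : Equiv.Perm (Fin n)),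
        lneg (List.ofFn x).prod ^ 2 ≤ lneg (List.ofFn (fun i => x (π i) ^ 2)).prod) :=
  iff_of_true (fun _ hM => hM.isNormalFilter hneg)
    (fun _ _ x π => lneg_prod_sq_le_lneg_prod_perm_sq (lneg_mul_comm hneg) x π)

/-- In a nontrivial pseudo BL-algebra satisfying `(x→y)⁻ = (x⇝y)⁻` and
`(x→y)·(x⇝y) = (x⇝y)·(x→y)`, every maximal filter is normal iff inequality (i)
holds. -/
theorem stmt_9 {A : Type*} [PseudoBL A] (hnt : (0 : A) ≠ 1)
    (hneg : ∀ x y : A, lneg (PseudoBL.himp x y) = lneg (PseudoBL.rimp x y))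
    (hcomm : ∀ x y : A,
      PseudoBL.himp x y * PseudoBL.rimp x y = PseudoBL.rimp x y * PseudoBL.himp x y) :
    (∀ F : Set A, IsMaximalFilter F → IsNormalFilter F) ↔
      (∀ (n : ℕ), 1 ≤ n → ∀ (x : Fin n → A) (π : Equiv.Perm (Fin n)),
        lneg (List.ofFn x).prod ^ 2 ≤ lneg (List.ofFn (fun i => x (π i) ^ 2)).prod) :=
  stmt_9_general hneg
end

section
/- Let (A, u) be a unital basic pseudo hoop satisfying, for all n ≥ 1, all elements and all permutations π of {1, …, n}, the inequalities: (i) ((x₁·⋯·xₙ)→u)² ≤ (x_{π(1)}²·⋯·x_{π(n)}²)→u; (ii) (((x→y)ⁿ)→u)² ≤ ((x⇝y)^{2n})→u; (iii) (((x⇝y)ⁿ)→u)² ≤ ((x→y)^{2n})→u. Then every maximal filter of A is normal. -/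
/-- A pseudo hoop: a monoid `(A; ·, 1)` with two implications `→` (`himp`) and
`⇝` (`rimp`) satisfying the pseudo-hoop identities, where the induced order
`x ≤ y ↔ x→y = 1 ↔ x⇝y = 1` is the given partial order. -/
class PseudoHoop (A : Type*) extends Monoid A, PartialOrder A where
  himp : A → A → A
  rimp : A → A → A
  himp_self : ∀ x : A, himp x x = 1
  rimp_self : ∀ x : A, rimp x x = 1
  himp_mul : ∀ x y z : A, himp (x * y) z = himp x (himp y z)
  rimp_mul : ∀ x y z : A, rimp (x * y) z = rimp y (rimp x z)
  div₁ : ∀ x y : A, himp x y * x = himp y x * y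
  div₂ : ∀ x y : A, himp x y * x = x * rimp x y
  div₃ : ∀ x y : A, x * rimp x y = y * rimp y x
  le_iff_himp : ∀ x y : A, x ≤ y ↔ himp x y = 1
  le_iff_rimp : ∀ x y : A, x ≤ y ↔ rimp x y = 1

/-- A basic pseudo hoop: a pseudo hoop satisfying (B1) and (B2). -/
class BasicPseudoHoop (A : Type*) extends PseudoHoop A where
  basic₁ : ∀ x y z : A,
    himp (himp x y) z ≤ himp (himp (himp y x) z) z
  basic₂ : ∀ x y z : A,
    rimp (rimp x y) z ≤ rimp (rimp (rimp y x) z) z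

namespace PseudoHoop

variable {A : Type*} [PseudoHoop A]

/-- A filter: a nonempty subset closed under `·` and upward closed. -/
def IsFilter (F : Set A) : Prop :=
  F.Nonempty ∧ (∀ x ∈ F, ∀ y ∈ F, x * y ∈ F) ∧ ∀ x ∈ F, ∀ y : A, x ≤ y → y ∈ F

/-- A maximal filter: a proper filter not properly contained in any proper filter. -/
def IsMaximalFilter (F : Set A) : Prop :=
  IsFilter F ∧ F ≠ Set.univ ∧
    ∀ G : Set A, IsFilter G → G ≠ Set.univ → F ⊆ G → F = G

/-- A normal filter: `x→y ∈ F` iff `x⇝y ∈ F`. -/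
def IsNormalFilter (F : Set A) : Prop :=
  ∀ x y : A, himp x y ∈ F ↔ rimp x y ∈ F

/-- The filter generated by an element `a`: all `x` with `aᵏ ≤ x` for some `k ≥ 1`. -/
def genFilter (a : A) : Set A := {x : A | ∃ k : ℕ, 1 ≤ k ∧ a ^ k ≤ x}

/-- A strong unit: an element generating the whole pseudo hoop as a filter. -/
def IsStrongUnit (u : A) : Prop := genFilter u = Set.univ

end PseudoHoop

open PseudoHoop

/-!
If `a ∉ F` for a maximal filter `F`, the filter generated by `F` and `a` is everything, so the
strong unit `u` lies above a product of elements of `F` and copies of `a`. Condition (i) lets us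
square the factors and move those from `F` to the front: `f · a^n ≤ u` with `f ∈ F` and `n ≥ 1`,
i.e. `a^n → u ∈ F`. Now if `x→y ∈ F` but `a = x⇝y ∉ F`, then by (iii) `(x→y)^(2n) → u ∈ F`, and
multiplying by `(x→y)^(2n) ∈ F` puts `u` into `F`, so `F` is not proper. The converse direction
is the same argument with (ii).
-/

theorem List.card_subtype_get_eq {α : Type*} [DecidableEq α] (l : List α) (c : α) :
    Fintype.card {i : Fin l.length // l.get i = c} = l.count c := by
  rw [Fintype.card_subtype]
  exact Fin.card_filter_univ_eq_vector_get_eq_count c ⟨l, rfl⟩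

theorem List.Perm.exists_ofFn_get_comp_eq {α : Type*} {l₁ l₂ : List α} (h : l₁.Perm l₂) :
    ∃ σ : Equiv.Perm (Fin l₁.length), List.ofFn (l₁.get ∘ σ) = l₂ := by
  classical
  have hfib : ∀ c, Fintype.card {i // l₂.get i = c} = Fintype.card {i // l₁.get i = c} := by
    intro c
    convert (List.card_subtype_get_eq l₂ c).trans ((h.count_eq c).symm.trans
      (List.card_subtype_get_eq l₁ c).symm)
  let e := Equiv.ofFiberEquiv fun c => Fintype.equivOfCardEq (hfib c)
  refine ⟨(finCongr h.length_eq).trans e, List.ext_get (by simp [h.length_eq]) fun i _ hi => ?_⟩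
  simpa [e] using Equiv.ofFiberEquiv_map (fun c => Fintype.equivOfCardEq (hfib c)) ⟨i, hi⟩

namespace PseudoHoop

variable {A : Type*} [PseudoHoop A]

theorem le_himp_iff {x y z : A} : x ≤ himp y z ↔ x * y ≤ z := by
  rw [le_iff_himp, le_iff_himp, himp_mul]

theorem le_rimp_iff {x y z : A} : x ≤ rimp y z ↔ y * x ≤ z := by
  rw [le_iff_rimp, le_iff_rimp, rimp_mul]

theorem himp_mul_le (y z : A) : himp y z * y ≤ z := le_himp_iff.1 le_rfl

theorem one_himp (z : A) : himp 1 z = z := by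
  have hle : rimp 1 z ≤ z := by
    rw [le_iff_rimp]
    simpa [rimp_self] using rimp_mul 1 (rimp 1 z) z
  have heq : himp 1 z = rimp 1 z := by simpa using div₂ 1 z
  exact le_antisymm (heq.trans_le hle) (le_himp_iff.2 (mul_one z).le)

theorem le_one (x : A) : x ≤ 1 := by
  have hx : himp x 1 * x = x := by simpa [one_himp] using div₁ x 1
  rw [le_iff_himp]
  calc himp x 1 = himp (himp x 1 * x) 1 := by rw [hx]
    _ = 1 := by rw [himp_mul, himp_self]

instance : MulLeftMono A := ⟨fun _ _ _ h => le_rimp_iff.1 (h.trans (le_rimp_iff.2 le_rfl))⟩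

instance : MulRightMono A := ⟨fun _ _ _ h => le_himp_iff.1 (h.trans (le_himp_iff.2 le_rfl))⟩

namespace IsFilter

variable {F : Set A}

theorem mem_of_le (hF : IsFilter F) {x y : A} (hx : x ∈ F) (hxy : x ≤ y) : y ∈ F :=
  hF.2.2 x hx y hxy

theorem one_mem (hF : IsFilter F) : (1 : A) ∈ F :=
  hF.1.elim fun _ hx => hF.mem_of_le hx (le_one _)

def toSubmonoid (hF : IsFilter F) : Submonoid A where
  carrier := F
  mul_mem' hx hy := hF.2.1 _ hx _ hy
  one_mem' := hF.one_mem

theorem eq_univ_of_mem {u : A} (hu : IsStrongUnit u) (hF : IsFilter F) (h : u ∈ F) :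
    F = Set.univ :=
  Set.eq_univ_of_forall fun x => by
    obtain ⟨k, -, hk⟩ : x ∈ genFilter u := hu ▸ Set.mem_univ x
    exact hF.mem_of_le (hF.toSubmonoid.pow_mem h k) hk

end IsFilter

def genFilterSet (S : Set A) : Set A := {z | ∃ l : List A, (∀ w ∈ l, w ∈ S) ∧ l.prod ≤ z}

theorem isFilter_genFilterSet (S : Set A) : IsFilter (genFilterSet S) := by
  refine ⟨⟨1, [], by simp, le_rfl⟩, ?_, ?_⟩
  · rintro z ⟨l₁, hl₁, hz⟩ w ⟨l₂, hl₂, hw⟩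
    refine ⟨l₁ ++ l₂, fun v hv => ?_, ?_⟩
    · rcases List.mem_append.1 hv with h | h
      exacts [hl₁ v h, hl₂ v h]
    · rw [List.prod_append]
      exact mul_le_mul' hz hw
  · rintro z ⟨l, hl, hz⟩ w hzw
    exact ⟨l, hl, hz.trans hzw⟩

theorem mem_genFilterSet {S : Set A} {a : A} (ha : a ∈ S) : a ∈ genFilterSet S :=
  ⟨[a], by simpa using ha, by simp⟩

/-- Condition (i) of the theorem. -/
def PermSqIneq (u : A) : Prop :=
  ∀ (n : ℕ), 1 ≤ n → ∀ (x : Fin n → A) (π : Equiv.Perm (Fin n)),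
    himp (List.ofFn x).prod u ^ 2 ≤ himp (List.ofFn (fun i => x (π i) ^ 2)).prod u

theorem PermSqIneq.prod_sq_filter_mul_le {u : A} (h1 : PermSqIneq u) (p : A → Bool)
    {l : List A} (hl : l ≠ []) (hlu : l.prod ≤ u) :
    ((l.filter p).map (· ^ 2)).prod * ((l.filter (fun w => !p w)).map (· ^ 2)).prod ≤ u := by
  obtain ⟨σ, hσ⟩ := (List.filter_append_perm p l).symm.exists_ofFn_get_comp_eq
  have h := h1 l.length (List.length_pos_iff.2 hl) l.get σ
  rw [List.ofFn_get, (le_iff_himp _ _).1 hlu, one_pow] at h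
  have hsq : List.ofFn (fun i => l.get (σ i) ^ 2) =
      (l.filter p ++ l.filter (fun w => !p w)).map (· ^ 2) := by
    rw [← hσ, List.map_ofFn]
    rfl
  rw [le_iff_himp, ← List.prod_append, ← List.map_append, ← hsq]
  exact le_antisymm (le_one _) h

namespace IsMaximalFilter

variable {F : Set A} {u : A}

theorem notMem_of_isStrongUnit (hF : IsMaximalFilter F) (hu : IsStrongUnit u) : u ∉ F :=
  fun h => hF.2.1 (hF.1.eq_univ_of_mem hu h)

theorem genFilterSet_insert_eq_univ (hF : IsMaximalFilter F) {a : A} (ha : a ∉ F) :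
    genFilterSet (insert a F) = Set.univ := by
  by_contra hne
  have hsub : F ⊆ genFilterSet (insert a F) := fun f hf => mem_genFilterSet (Or.inr hf)
  exact ha ((hF.2.2 _ (isFilter_genFilterSet _) hne hsub) ▸ mem_genFilterSet (Or.inl rfl))

theorem exists_himp_pow_mem (hF : IsMaximalFilter F) (hu : IsStrongUnit u) (h1 : PermSqIneq u)
    {a : A} (ha : a ∉ F) : ∃ n, 1 ≤ n ∧ himp (a ^ n) u ∈ F := by
  classical
  obtain ⟨l, hlS, hlu⟩ : u ∈ genFilterSet (insert a F) :=
    hF.genFilterSet_insert_eq_univ ha ▸ Set.mem_univ u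
  have hl : l ≠ [] := by
    rintro rfl
    exact hF.notMem_of_isStrongUnit hu (hF.1.mem_of_le hF.1.one_mem hlu)
  let p : A → Bool := fun w => decide (w ∈ F)
  have hin : ((l.filter p).map (· ^ 2)).prod ∈ F := by
    refine hF.1.toSubmonoid.list_prod_mem fun v hv => ?_
    obtain ⟨w, hw, rfl⟩ := List.mem_map.1 hv
    exact hF.1.toSubmonoid.pow_mem (show w ∈ F by simpa [p] using (List.mem_filter.1 hw).2) 2
  have hout : ((l.filter (fun w => !p w)).map (· ^ 2)).prod =
      a ^ (2 * (l.filter (fun w => !p w)).length) := by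
    rw [List.prod_eq_pow_card _ (a ^ 2), List.length_map, ← pow_mul]
    intro v hv
    obtain ⟨w, hw, rfl⟩ := List.mem_map.1 hv
    obtain ⟨hwl, hwF⟩ := List.mem_filter.1 hw
    rcases hlS w hwl with rfl | h
    · rfl
    · simp [p, h] at hwF
  have hmem := hF.1.mem_of_le hin (le_himp_iff.2 (hout ▸ h1.prod_sq_filter_mul_le p hl hlu))
  refine ⟨_, Nat.pos_of_ne_zero fun h0 => hF.notMem_of_isStrongUnit hu ?_, hmem⟩
  rwa [h0, pow_zero, one_himp] at hmem

theorem mem_of_sq_himp_pow_le (hF : IsMaximalFilter F) (hu : IsStrongUnit u)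
    (h1 : PermSqIneq u) {s t : A}
    (hst : ∀ n : ℕ, 1 ≤ n → himp (s ^ n) u ^ 2 ≤ himp (t ^ (2 * n)) u) (ht : t ∈ F) :
    s ∈ F := by
  by_contra hs
  obtain ⟨n, hn, hmem⟩ := hF.exists_himp_pow_mem hu h1 hs
  have htu : himp (t ^ (2 * n)) u ∈ F :=
    hF.1.mem_of_le (hF.1.toSubmonoid.pow_mem hmem 2) (hst n hn)
  have hprod := hF.1.toSubmonoid.mul_mem htu (hF.1.toSubmonoid.pow_mem ht (2 * n))
  exact hF.notMem_of_isStrongUnit hu (hF.1.mem_of_le hprod (himp_mul_le _ _))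

end IsMaximalFilter

end PseudoHoop

/-- A unital basic pseudo hoop `(A, u)` satisfying inequalities
(i)-(iii) has every maximal filter normal. -/
theorem stmt_17 {A : Type*} [BasicPseudoHoop A] (u : A) (hu : IsStrongUnit u)
    (h1 : ∀ (n : ℕ), 1 ≤ n → ∀ (x : Fin n → A) (π : Equiv.Perm (Fin n)),
      PseudoHoop.himp (List.ofFn x).prod u ^ 2 ≤
        PseudoHoop.himp (List.ofFn (fun i => x (π i) ^ 2)).prod u)
    (h2 : ∀ (n : ℕ), 1 ≤ n → ∀ x y : A,
      PseudoHoop.himp (PseudoHoop.himp x y ^ n) u ^ 2 ≤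
        PseudoHoop.himp (PseudoHoop.rimp x y ^ (2 * n)) u)
    (h3 : ∀ (n : ℕ), 1 ≤ n → ∀ x y : A,
      PseudoHoop.himp (PseudoHoop.rimp x y ^ n) u ^ 2 ≤
        PseudoHoop.himp (PseudoHoop.himp x y ^ (2 * n)) u) :
    ∀ F : Set A, IsMaximalFilter F → IsNormalFilter F := by
  intro F hF x y
  exact ⟨hF.mem_of_sq_himp_pow_le hu h1 (fun n hn => h3 n hn x y),
    hF.mem_of_sq_himp_pow_le hu h1 (fun n hn => h2 n hn x y)⟩
end
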